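/- arXiv:1101.0796 — 2 statements merged into one kernel-verified Lean document; each statement's English description precedes it below -/
import Mathlib

section
/- Let (b_i) be a finite sequence of nonnegative reals with each b_i ≤ β^{k-1} and ∑_i b_i ≤ β^{k+1}, where β ≥ 1. Form a random subset W by including each index i independently with probability β^{-2}. Let X = ∑_{i ∈ W} b_i. Then E[X] ≤ β^{k-1}, and by a Chernoff-type bound, P(X > β^k) ≤ (e/β)^β (i.e., the probability is of order 1/β!). -/
/-!
Normalize the weights to `x i = b i / β^(k-1) ∈ [0, 1]`; the selected mass then has mean
`μ ≤ 1` and the event is `∑ x > β`. Markov's inequality applied to `β ^ (∑ x)` bounds its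
probability by `β^(-β) · E[β ^ (∑ x)]`, the expectation factorizes over the independent indices,
and concavity gives `β ^ x ≤ 1 + x (β - 1)`, so `E[β ^ (∑ x)] ≤ exp (μ (β - 1)) ≤ e^β`.
-/

open Finset Real

section BernoulliSubset

variable {ι : Type*} [Fintype ι]

/-- The probability that a random subset of `ι`, containing each element independently with
probability `p`, equals `S`. -/
def bernoulliWeight (p : ℝ) (S : Finset ι) : ℝ :=
  p ^ S.card * (1 - p) ^ (Fintype.card ι - S.card)

lemma bernoulliWeight_nonneg {p : ℝ} (hp0 : 0 ≤ p) (hp1 : p ≤ 1) (S : Finset ι) :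
    0 ≤ bernoulliWeight p S :=
  mul_nonneg (pow_nonneg hp0 _) (pow_nonneg (sub_nonneg.2 hp1) _)

lemma sum_bernoulliWeight_mul_prod (p : ℝ) (g : ι → ℝ) :
    ∑ S : Finset ι, bernoulliWeight p S * ∏ i ∈ S, g i = ∏ i, (p * g i + (1 - p)) := by
  classical
  rw [prod_add, powerset_univ]
  refine sum_congr rfl fun S _ => ?_
  rw [bernoulliWeight, prod_mul_distrib, prod_const, prod_const, card_sdiff_of_subset
    (subset_univ S), card_univ]
  ring

lemma ite_lt_le_rpow_sub {β : ℝ} (hβ : 1 ≤ β) (a s : ℝ) :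
    (if a < s then (1 : ℝ) else 0) ≤ β ^ (s - a) := by
  split_ifs with h
  · exact one_le_rpow hβ (sub_nonneg.2 h.le)
  · exact rpow_nonneg (zero_le_one.trans hβ) _

/-- `E[β ^ X] ≤ exp (E[X] (β - 1))` for `X = x · Bernoulli(p)`. -/
lemma mul_rpow_add_one_sub_le_exp {p β x : ℝ} (hp : 0 ≤ p) (hβ : 0 ≤ β) (hx0 : 0 ≤ x)
    (hx1 : x ≤ 1) : p * β ^ x + (1 - p) ≤ exp (p * x * (β - 1)) := by
  have hconc : β ^ x ≤ 1 + x * (β - 1) := by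
    simpa using rpow_one_add_le_one_add_mul_self (s := β - 1) (by linarith) hx0 hx1
  calc p * β ^ x + (1 - p) ≤ p * (1 + x * (β - 1)) + (1 - p) := by gcongr
    _ = p * x * (β - 1) + 1 := by ring
    _ ≤ exp (p * x * (β - 1)) := add_one_le_exp _

theorem sum_bernoulliWeight_ite_lt_le {p β a : ℝ} (hp0 : 0 ≤ p) (hp1 : p ≤ 1) (hβ : 1 ≤ β)
    {x : ι → ℝ} (hx0 : ∀ i, 0 ≤ x i) (hx1 : ∀ i, x i ≤ 1) :
    ∑ S : Finset ι, bernoulliWeight p S * (if a < ∑ i ∈ S, x i then 1 else 0)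
      ≤ exp (p * (∑ i, x i) * (β - 1)) / β ^ a := by
  have hβ0 : 0 < β := zero_lt_one.trans_le hβ
  calc ∑ S : Finset ι, bernoulliWeight p S * (if a < ∑ i ∈ S, x i then 1 else 0)
      ≤ ∑ S : Finset ι, bernoulliWeight p S * (∏ i ∈ S, β ^ x i) / β ^ a := by
        refine sum_le_sum fun S _ => ?_
        rw [mul_div_assoc, ← rpow_sum_of_pos hβ0, ← rpow_sub hβ0]
        exact mul_le_mul_of_nonneg_left (ite_lt_le_rpow_sub hβ _ _)
          (bernoulliWeight_nonneg hp0 hp1 S)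
    _ = (∏ i, (p * β ^ x i + (1 - p))) / β ^ a := by
        rw [← sum_div, sum_bernoulliWeight_mul_prod]
    _ ≤ (∏ i, exp (p * x i * (β - 1))) / β ^ a := by
        gcongr with i
        exact mul_rpow_add_one_sub_le_exp hp0 hβ0.le (hx0 i) (hx1 i)
    _ = exp (p * (∑ i, x i) * (β - 1)) / β ^ a := by
        rw [← exp_sum, mul_sum, sum_mul]

end BernoulliSubset

/-- Random subset sum: each index is included independently with probability `β⁻²`.
If each `b i ≤ β^(k-1)` and `∑ b i ≤ β^(k+1)`, then the expected value of the subset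
sum is at most `β^(k-1)`, and the probability that the subset sum exceeds `β^k` is
at most `(e/β)^β`. -/
theorem stmt_1 (β : ℝ) (hβ : 1 ≤ β) (k N : ℕ) (hk : 1 ≤ k)
    (b : Fin N → ℝ) (hb0 : ∀ i, 0 ≤ b i) (hb1 : ∀ i, b i ≤ β ^ (k - 1))
    (hsum : ∑ i, b i ≤ β ^ (k + 1)) :
    (β⁻¹ ^ 2 * ∑ i, b i ≤ β ^ (k - 1)) ∧
    (∑ S : Finset (Fin N),
        ((β⁻¹ ^ 2) ^ S.card * (1 - β⁻¹ ^ 2) ^ (N - S.card) *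
          (if β ^ k < ∑ i ∈ S, b i then (1 : ℝ) else 0)))
      ≤ (Real.exp 1 / β) ^ β := by
  have hβ0 : 0 < β := zero_lt_one.trans_le hβ
  have hpow : β ^ k = β * β ^ (k - 1) := by rw [← pow_succ', Nat.sub_add_cancel hk]
  set B := β ^ (k - 1)
  have hB : 0 < B := pow_pos hβ0 _
  have hmean : β⁻¹ ^ 2 * ∑ i, b i ≤ B :=
    calc β⁻¹ ^ 2 * ∑ i, b i ≤ β⁻¹ ^ 2 * (β ^ 2 * B) := by
          rwa [← pow_add, add_comm, show k - 1 + 2 = k + 1 by omega,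
            mul_le_mul_iff_of_pos_left (by positivity)]
      _ = B := by field_simp
  refine ⟨hmean, ?_⟩
  set p := β⁻¹ ^ 2
  have hevent (S : Finset (Fin N)) : β ^ k < ∑ i ∈ S, b i ↔ β < ∑ i ∈ S, b i / B := by
    rw [← sum_div, lt_div_iff₀ hB, hpow]
  have hexponent : p * (∑ i, b i / B) * (β - 1) ≤ β := by
    have : p * ∑ i, b i / B ≤ 1 := by rwa [← sum_div, ← mul_div_assoc, div_le_one hB]
    nlinarith
  calc _ = ∑ S : Finset (Fin N),
        bernoulliWeight p S * (if β < ∑ i ∈ S, b i / B then 1 else 0) := by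
        simp only [bernoulliWeight, Fintype.card_fin, hevent]
    _ ≤ exp (p * (∑ i, b i / B) * (β - 1)) / β ^ β :=
        sum_bernoulliWeight_ite_lt_le (by positivity)
          (pow_le_one₀ (by positivity) (inv_le_one_of_one_le₀ hβ)) hβ
          (fun i => div_nonneg (hb0 i) hB.le) (fun i => (div_le_one hB).2 (hb1 i))
    _ ≤ exp β / β ^ β := by gcongr
    _ = (exp 1 / β) ^ β := by rw [div_rpow (exp_pos 1).le hβ0.le, exp_one_rpow]
end

section
/- Fix constants c₁ ≥ 0, c₂ ≥ 0, ω > 1, c' ≥ 1 + c₁, and c > 0 with c₂·c·c' ≤ 1. Suppose z: (nodes of a tree) → ℝ satisfies: z(leaf) = 1; and for an internal node d at height n̄ with children at height n̄-1, z(d) ≤ c₁ + w(d)·(max over strong children z)·(1 + (c₂·c·c'/n)·1), where w(d) = 1 if d is trivial and w(d) ≤ ω if d is a fault; strong children of a trivial node d satisfy κ ≤ κ(d), strong children of a fault node satisfy κ ≤ κ(d) - 1, and inductively each child b at height n̄-1 satisfies z(b) ≤ c'·(n̄-1)·ω^{κ(b)}·(1 + c₂cc'/n)^{n̄-1}. Then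 z(d) ≤ c'·n̄·ω^{κ(d)}·(1 + c₂cc'/n)^{n̄} for every node d at height n̄ ≥ 1. -/
/-!
At a trivial node the strong children have at most `κ(d)` faults, while at a fault node the
weight `w ≤ ω` is paid for by the strong children having at most `κ(d) - 1` faults; either
way, with `ε = c₂cc'/n`, `w · max z ≤ c' (n̄ - 1) ω^κ(d) (1 + ε)^(n̄ - 1)`. Multiplying by
`1 + ε` and absorbing the additive `c₁ ≤ c'` into one more copy of `c' ω^κ(d) (1 + ε)^n̄ ≥ c'`
raises `n̄ - 1` to `n̄`.
-/

section ChildrenBound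

variable {ι : Type*} {s : Finset ι} (hs : s.Nonempty) {z : ι → ℝ} {κ : ι → ℕ}
  {a b ω : ℝ}

include hs in
theorem Finset.sup'_le_mul_pow_mul {m : ℕ} (ha : 0 ≤ a) (hb : 0 ≤ b) (hω : 1 ≤ ω)
    (hz : ∀ j ∈ s, z j ≤ a * ω ^ κ j * b) (hκ : ∀ j ∈ s, κ j ≤ m) :
    s.sup' hs z ≤ a * ω ^ m * b :=
  Finset.sup'_le hs z fun j hj => (hz j hj).trans (by gcongr; exact hκ j hj)

theorem Finset.mul_sup'_le_mul_pow_mul_of_succ_le {w : ℝ} {k : ℕ} (ha : 0 ≤ a) (hb : 0 ≤ b)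
    (hω : 1 ≤ ω) (hw₀ : 0 ≤ w) (hw : w ≤ ω)
    (hz : ∀ j ∈ s, z j ≤ a * ω ^ κ j * b) (hκ : ∀ j ∈ s, κ j + 1 ≤ k) :
    w * s.sup' hs z ≤ a * ω ^ k * b := by
  obtain ⟨j₀, hj₀⟩ := hs
  obtain ⟨m, rfl⟩ : ∃ m, k = m + 1 := ⟨k - 1, by have := hκ j₀ hj₀; omega⟩
  have hsup := Finset.sup'_le_mul_pow_mul (m := m) ⟨j₀, hj₀⟩ ha hb hω hz fun j hj => by
    have := hκ j hj; omega
  calc w * s.sup' ⟨j₀, hj₀⟩ z ≤ w * (a * ω ^ m * b) := mul_le_mul_of_nonneg_left hsup hw₀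
    _ ≤ ω * (a * ω ^ m * b) := mul_le_mul_of_nonneg_right hw (by positivity)
    _ = a * ω ^ (m + 1) * b := by ring

end ChildrenBound

theorem add_mul_le_succ_mul_pow_succ {c₁ c' P q W : ℝ} {m : ℕ} (hc₁ : c₁ ≤ c')
    (hc' : 0 ≤ c') (hP : 1 ≤ P) (hq : 1 ≤ q) (hW : W ≤ c' * m * P * q ^ m) :
    c₁ + W * q ≤ c' * ((m + 1 : ℕ) : ℝ) * P * q ^ (m + 1) := by
  have hPq : 1 ≤ P * q ^ (m + 1) := one_le_mul_of_one_le_of_one_le hP (one_le_pow₀ hq)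
  have hWq : W * q ≤ c' * m * P * q ^ (m + 1) := by
    calc W * q ≤ c' * m * P * q ^ m * q := by gcongr
      _ = c' * m * P * q ^ (m + 1) := by ring
  have hc₁' : c₁ ≤ c' * (P * q ^ (m + 1)) := hc₁.trans (le_mul_of_one_le_right hc' hPq)
  push_cast
  linarith

theorem stmt_10_general (c₁ c₂ ω c' c : ℝ) (n nb : ℕ)
    (hc₁ : 0 ≤ c₁) (hc₂ : 0 ≤ c₂) (hω : 1 < ω) (hc' : 1 + c₁ ≤ c') (hc : 0 < c)
    (hnb : 1 ≤ nb)
    (cc : ℕ) (z : Fin cc → ℝ) (κb : Fin cc → ℕ)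
    (strong : Fin cc → Prop) [DecidablePred strong]
    (hne : (Finset.univ.filter strong).Nonempty)
    (triv : Prop) (w : ℝ) (κd : ℕ) (zd : ℝ)
    (hwt : triv → w = 1) (hwf : ¬triv → w ≤ ω) (hw0 : 0 ≤ w)
    (hκt : triv → ∀ j, strong j → κb j ≤ κd)
    (hκf : ¬triv → ∀ j, strong j → κb j + 1 ≤ κd)
    (hzd : zd ≤ c₁ + w *
        ((Finset.univ.filter strong).sup' hne z) * (1 + c₂ * c * c' / n))
    (hind : ∀ j : Fin cc,
        z j ≤ c' * (nb - 1 : ℕ) * ω ^ κb j * (1 + c₂ * c * c' / n) ^ (nb - 1)) :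
    zd ≤ c' * nb * ω ^ κd * (1 + c₂ * c * c' / n) ^ nb := by
  obtain ⟨m, rfl⟩ := Nat.exists_eq_add_of_le' hnb
  have hc'₀ : 0 ≤ c' := by linarith
  have hq : 1 ≤ 1 + c₂ * c * c' / n := le_add_of_nonneg_right (by positivity)
  have hz : ∀ j ∈ Finset.univ.filter strong,
      z j ≤ c' * m * ω ^ κb j * (1 + c₂ * c * c' / n) ^ m := fun j _ => by
    simpa using hind j
  have hsup : w * (Finset.univ.filter strong).sup' hne z
      ≤ c' * m * ω ^ κd * (1 + c₂ * c * c' / n) ^ m := by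
    by_cases ht : triv
    · rw [hwt ht, one_mul]
      exact Finset.sup'_le_mul_pow_mul hne (by positivity) (by positivity) hω.le hz
        fun j hj => hκt ht j (Finset.mem_filter.mp hj).2
    · exact Finset.mul_sup'_le_mul_pow_mul_of_succ_le hne (by positivity) (by positivity)
        hω.le hw0 (hwf ht) hz fun j hj => hκf ht j (Finset.mem_filter.mp hj).2
  exact hzd.trans
    (add_mul_le_succ_mul_pow_succ (by linarith) hc'₀ (one_le_pow₀ hω.le) hq hsup)

/-- Inductive step of Theorem 1: the subformula complexity bound
`z ≤ c' · nb · ω^κ · (1 + c₂cc'/n)^nb` propagates from the children (at height `nb - 1`)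
to a node at height `nb`. -/
theorem stmt_10 (c₁ c₂ ω c' c : ℝ) (n nb : ℕ)
    (hc₁ : 0 ≤ c₁) (hc₂ : 0 ≤ c₂) (hω : 1 < ω) (hc' : 1 + c₁ ≤ c') (hc : 0 < c)
    (hcc : c₂ * c * c' ≤ 1) (hn : 1 ≤ n) (hnb : 1 ≤ nb)
    (cc : ℕ) (z : Fin cc → ℝ) (κb : Fin cc → ℕ)
    (strong : Fin cc → Prop) [DecidablePred strong]
    (hne : (Finset.univ.filter strong).Nonempty)
    (triv : Prop) (w : ℝ) (κd : ℕ) (zd : ℝ)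
    (hwt : triv → w = 1) (hwf : ¬triv → w ≤ ω) (hw0 : 0 ≤ w)
    (hκt : triv → ∀ j, strong j → κb j ≤ κd)
    (hκf : ¬triv → ∀ j, strong j → κb j + 1 ≤ κd)
    (hzd : zd ≤ c₁ + w *
        ((Finset.univ.filter strong).sup' hne z) * (1 + c₂ * c * c' / n))
    (hind : ∀ j : Fin cc,
        z j ≤ c' * (nb - 1 : ℕ) * ω ^ κb j * (1 + c₂ * c * c' / n) ^ (nb - 1)) :
    zd ≤ c' * nb * ω ^ κd * (1 + c₂ * c * c' / n) ^ nb :=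
  stmt_10_general c₁ c₂ ω c' c n nb hc₁ hc₂ hω hc' hc hnb cc z κb strong hne triv w κd zd hwt hwf
    hw0 hκt hκf hzd hind
end
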